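/- arXiv:2112.12281 — 2 statements merged into one kernel-verified Lean document; each statement's English description precedes it below -/
import Mathlib

section
/- Let n be a positive integer, γ ∈ [0,1), and let P_μ, P_π be n×n row-stochastic matrices with nonnegative entries. Let (B_t)_{t≥0} be a sequence of diagonal n×n matrices with nonnegative entries such that B_0 = I and for all t ≥ 1, P_μ^{t-1}(B_{t-1} P_π - P_μ B_t) ≥ 0 entrywise. Then the matrix A := Σ_{t≥1} γ^t P_μ^{t-1}(B_{t-1} P_π - P_μ B_t) satisfies A e ≤ γ e entrywise, where e is the all-ones vector. -/
open Matrix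

theorem stmt0 (n : ℕ) (hn : 0 < n) (γ : ℝ) (hγ : γ ∈ Set.Ico (0:ℝ) 1)
    (Pμ Pπ : Matrix (Fin n) (Fin n) ℝ)
    (hPμ0 : ∀ i j, 0 ≤ Pμ i j) (hPμ1 : ∀ i, ∑ j, Pμ i j = 1)
    (hPπ0 : ∀ i j, 0 ≤ Pπ i j) (hPπ1 : ∀ i, ∑ j, Pπ i j = 1)
    (B : ℕ → Matrix (Fin n) (Fin n) ℝ)
    (hBdiag : ∀ t, (B t).IsDiag)
    (hB0 : ∀ t i, 0 ≤ B t i i)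
    (hB1 : B 0 = 1)
    (hpos : ∀ t : ℕ, ∀ i j, 0 ≤ (Pμ ^ t * (B t * Pπ - Pμ * B (t + 1))) i j)
    (hsum : Summable (fun t : ℕ => γ ^ (t + 1) • (Pμ ^ t * (B t * Pπ - Pμ * B (t + 1)))))
    (A : Matrix (Fin n) (Fin n) ℝ)
    (hA : A = ∑' t : ℕ, γ ^ (t + 1) • (Pμ ^ t * (B t * Pπ - Pμ * B (t + 1)))) :
    ∀ i, (A.mulVec (fun _ => (1:ℝ))) i ≤ γ := by
  intro i
  obtain ⟨hγ0, hγ1⟩ := hγ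
  set T : ℕ → Matrix (Fin n) (Fin n) ℝ := fun t => Pμ ^ t * (B t * Pπ - Pμ * B (t+1)) with hT
  have hBent : ∀ t k j, 0 ≤ B t k j := by
    intro t k j
    by_cases h : k = j
    · subst h; exact hB0 t k
    · rw [hBdiag t h]
  have hPow : ∀ t a b, 0 ≤ (Pμ ^ t) a b := by
    intro t
    induction t with
    | zero => intro a b; rw [pow_zero, Matrix.one_apply]; positivity
    | succ t ih =>
      intro a b
      rw [pow_succ, Matrix.mul_apply]
      exact Finset.sum_nonneg fun k _ => mul_nonneg (ih a k) (hPμ0 k b)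
  set f : ℕ → ℝ := fun t => ∑ j, (Pμ ^ t * B t) i j with hf
  have hf0 : f 0 = 1 := by
    simp [hf, hB1, Matrix.one_apply]
  have hfnn : ∀ t, 0 ≤ f t := by
    intro t
    refine Finset.sum_nonneg fun j _ => ?_
    rw [Matrix.mul_apply]
    exact Finset.sum_nonneg fun k _ => mul_nonneg (hPow t i k) (hBent t k j)
  have hrow : ∀ t, ∑ j, T t i j = f t - f (t+1) := by
    intro t
    have h1 : T t = (Pμ ^ t * B t) * Pπ - Pμ ^ (t+1) * B (t+1) := by
      rw [hT]
      dsimp only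
      rw [Matrix.mul_sub, ← Matrix.mul_assoc, ← Matrix.mul_assoc, ← pow_succ]
    rw [h1]
    simp only [Matrix.sub_apply]
    rw [Finset.sum_sub_distrib]
    have h2 : ∑ j, ((Pμ ^ t * B t) * Pπ) i j = f t := by
      simp only [Matrix.mul_apply]
      rw [Finset.sum_comm]
      simp only [← Finset.mul_sum, hPπ1, mul_one]
      rfl
    rw [h2]
  -- entrywise summability
  have hsum1 : ∀ j, Summable (fun t => (γ ^ (t+1) • T t) i j) := by
    intro j
    exact Pi.summable.1 (Pi.summable.1 hsum i) j
  have hA' : ∀ j, A i j = ∑' t, (γ ^ (t+1) • T t) i j := by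
    intro j
    rw [hA]
    exact (congrFun (tsum_apply hsum) j).trans (tsum_apply (Pi.summable.1 hsum i))
  have hmv : (A.mulVec (fun _ => (1:ℝ))) i = ∑' t, ∑ j, (γ ^ (t+1) • T t) i j := by
    rw [Matrix.mulVec, dotProduct]
    simp only [mul_one]
    rw [Finset.sum_congr rfl (fun j _ => hA' j)]
    rw [← Summable.tsum_finsetSum (fun j _ => hsum1 j)]
  rw [hmv]
  have hterm : ∀ t, ∑ j, (γ ^ (t+1) • T t) i j = γ ^ (t+1) * (f t - f (t+1)) := by
    intro t
    simp only [Matrix.smul_apply, smul_eq_mul, ← Finset.mul_sum, hrow]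
  have htnn : ∀ t, 0 ≤ ∑ j, (γ ^ (t+1) • T t) i j := by
    intro t
    refine Finset.sum_nonneg fun j _ => ?_
    simp only [Matrix.smul_apply, smul_eq_mul]
    exact mul_nonneg (pow_nonneg hγ0 _) (hpos t i j)
  -- key partial sum bound
  have key : ∀ N, ∑ t ∈ Finset.range N, γ ^ (t+1) * (f t - f (t+1)) + γ ^ (N+1) * f N ≤ γ * f 0 := by
    intro N
    induction N with
    | zero => simp
    | succ N ih =>
      rw [Finset.sum_range_succ]
      have h3 : γ ^ (N+2) * f (N+1) ≤ γ ^ (N+1) * f (N+1) :=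
        mul_le_mul_of_nonneg_right (pow_le_pow_of_le_one hγ0 hγ1.le (by omega)) (hfnn _)
      nlinarith [hfnn (N+1)]
  refine Summable.tsum_le_of_sum_le (summable_sum (fun j _ => hsum1 j)) ?_
  intro s
  obtain ⟨N, hN⟩ : ∃ N, s ⊆ Finset.range N := ⟨s.sup id + 1, fun x hx =>
    Finset.mem_range.mpr (Nat.lt_succ_of_le (Finset.le_sup (f := id) hx))⟩
  calc ∑ t ∈ s, ∑ j, (γ ^ (t+1) • T t) i j
      ≤ ∑ t ∈ Finset.range N, ∑ j, (γ ^ (t+1) • T t) i j :=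
        Finset.sum_le_sum_of_subset_of_nonneg hN (fun t _ _ => htnn t)
    _ = ∑ t ∈ Finset.range N, γ ^ (t+1) * (f t - f (t+1)) :=
        Finset.sum_congr rfl (fun t _ => hterm t)
    _ ≤ γ * f 0 - γ ^ (N+1) * f N := by linarith [key N]
    _ ≤ γ := by
        rw [hf0, mul_one]
        nlinarith [hfnn N, pow_nonneg hγ0 (N+1)]
end

section
/- Let γ ∈ [0,1), let P_π, P_{π*}, P_μ be row-stochastic n×n matrices, let C be an n×n matrix with nonnegative entries satisfying ||I - C(I - γP_π)||_∞ ≤ γ, ||I - C(I - γP_{π*})||_∞ ≤ γ, and ||C||_∞ ≤ 1/(1-γ). Suppose Q, Q*, Δ_+ ∈ ℝ^n satisfy: Q' - Q* ≤ (I - C(I - γP_π))(Q - Q*) entrywise and Q' - Q* ≥ (I - C(I - γP_{π*}))(Q - Q*) - ε||Q||_∞ C e entrywise for some ε ≥ 0, where Q' ∈ ℝ^n. Then ||Q' - Q*||_∞ ≤ γ||Q - Q*||_∞ + (ε/(1-γ))||Q||_∞. -/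
open Matrix

theorem stmt14 (n : ℕ) (hn : 0 < n) (γ : ℝ) (hγ : γ ∈ Set.Ico (0:ℝ) 1)
    (Pπ Pstar Pμ : Matrix (Fin n) (Fin n) ℝ)
    (hPπ0 : ∀ i j, 0 ≤ Pπ i j) (hPπ1 : ∀ i, ∑ j, Pπ i j = 1)
    (hPstar0 : ∀ i j, 0 ≤ Pstar i j) (hPstar1 : ∀ i, ∑ j, Pstar i j = 1)
    (hPμ0 : ∀ i j, 0 ≤ Pμ i j) (hPμ1 : ∀ i, ∑ j, Pμ i j = 1)
    (C : Matrix (Fin n) (Fin n) ℝ)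
    (hC0 : ∀ i j, 0 ≤ C i j)
    (hC1 : ∀ i, ∑ j, |(1 - C * (1 - γ • Pπ)) i j| ≤ γ)
    (hC2 : ∀ i, ∑ j, |(1 - C * (1 - γ • Pstar)) i j| ≤ γ)
    (hC3 : ∀ i, ∑ j, |C i j| ≤ 1 / (1 - γ))
    (ε : ℝ) (hε : 0 ≤ ε)
    (Q Qstar Q' : Fin n → ℝ)
    (hupper : ∀ i, Q' i - Qstar i ≤ ((1 - C * (1 - γ • Pπ)).mulVec (Q - Qstar)) i)
    (hlower : ∀ i, Q' i - Qstar i ≥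
      ((1 - C * (1 - γ • Pstar)).mulVec (Q - Qstar)) i
        - ε * ‖Q‖ * (C.mulVec (fun _ => (1:ℝ))) i) :
    ‖Q' - Qstar‖ ≤ γ * ‖Q - Qstar‖ + ε / (1 - γ) * ‖Q‖ := by

  have h1γ : (0:ℝ) < 1 - γ := by linarith [hγ.2]
  have hγ0 := hγ.1
  set x : Fin n → ℝ := Q - Qstar with hx
  have hxnorm : ∀ j, |x j| ≤ ‖x‖ := fun j => by
    simpa [Real.norm_eq_abs] using norm_le_pi_norm x j
  have key : ∀ (A : Matrix (Fin n) (Fin n) ℝ) (i : Fin n), (∑ j, |A i j|) ≤ γ →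
      |A.mulVec x i| ≤ γ * ‖x‖ := by
    intro A i hA
    calc |A.mulVec x i| = |∑ j, A i j * x j| := rfl
    _ ≤ ∑ j, |A i j * x j| := Finset.abs_sum_le_sum_abs _ _
    _ ≤ ∑ j, |A i j| * ‖x‖ := by
        apply Finset.sum_le_sum; intro j _
        rw [abs_mul]; exact mul_le_mul_of_nonneg_left (hxnorm j) (abs_nonneg _)
    _ = (∑ j, |A i j|) * ‖x‖ := by rw [Finset.sum_mul]
    _ ≤ γ * ‖x‖ := mul_le_mul_of_nonneg_right hA (norm_nonneg _)
  have hCe : ∀ i, C.mulVec (fun _ => (1:ℝ)) i ≤ 1/(1-γ) := by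
    intro i
    calc C.mulVec (fun _ => (1:ℝ)) i = ∑ j, C i j := by
          simp [Matrix.mulVec, dotProduct]
    _ = ∑ j, |C i j| := by
        exact Finset.sum_congr rfl fun j _ => (abs_of_nonneg (hC0 i j)).symm
    _ ≤ 1/(1-γ) := hC3 i
  have hCe0 : ∀ i, 0 ≤ C.mulVec (fun _ => (1:ℝ)) i := by
    intro i
    rw [Matrix.mulVec, dotProduct]
    exact Finset.sum_nonneg fun j _ => mul_nonneg (hC0 i j) zero_le_one
  have hpert : ∀ i, ε * ‖Q‖ * (C.mulVec (fun _ => (1:ℝ))) i ≤ ε / (1-γ) * ‖Q‖ := by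
    intro i
    have h1 : ε * ‖Q‖ * (C.mulVec (fun _ => (1:ℝ))) i ≤ ε * ‖Q‖ * (1/(1-γ)) :=
      mul_le_mul_of_nonneg_left (hCe i) (mul_nonneg hε (norm_nonneg _))
    calc ε * ‖Q‖ * (C.mulVec (fun _ => (1:ℝ))) i ≤ ε * ‖Q‖ * (1/(1-γ)) := h1
    _ = ε / (1-γ) * ‖Q‖ := by ring
  have hpertpos : 0 ≤ ε / (1-γ) * ‖Q‖ :=
    mul_nonneg (div_nonneg hε h1γ.le) (norm_nonneg _)
  apply pi_norm_le_iff_of_nonneg (by positivity : (0:ℝ) ≤ γ * ‖x‖ + ε / (1-γ) * ‖Q‖) |>.2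
  intro i
  rw [Real.norm_eq_abs, abs_le]
  constructor
  · have h2 := hlower i
    have h3 := (key _ i (hC2 i))
    have h4 := hpert i
    have : -(γ * ‖x‖) ≤ (1 - C * (1 - γ • Pstar)).mulVec x i := neg_le_of_abs_le h3
    simp only [Pi.sub_apply]
    linarith
  · have h2 := hupper i
    have h3 := (key _ i (hC1 i))
    have : (1 - C * (1 - γ • Pπ)).mulVec x i ≤ γ * ‖x‖ := le_of_abs_le h3
    simp only [Pi.sub_apply]
    linarith
end
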